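/- arXiv:2512.04194 — 2 statements merged into one kernel-verified Lean document; each statement's English description precedes it below -/
import Mathlib

section
/- Let Z_1,…,Z_M be i.i.d. real random variables with CDF F_Z, let δ, γ ∈ (0,1), and suppose M > log(γ)/log(1-δ). Let k* = F_B^{-1}(γ; M, δ) be the γ-quantile of the Binomial(M, δ) distribution. Then k* ∈ {1,…,M} and P{Z_{(k*)} ≤ q_δ(Z)} ≥ 1 - γ, where Z_{(k)} denotes the k-th order statistic and q_δ(Z) = inf{τ : F_Z(τ) ≥ δ} is the δ-quantile. -/
/-!
The number `N` of samples `Z t ≤ q` at the quantile `q = q_δ(Z)` is Binomial(M, p) with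
`p = F_Z(q) ≥ δ`, by right-continuity of the CDF. On the event `N ≥ k` the `k`-th order statistic
is at most `q`, and the complementary event `N ≤ k - 1` has probability `F_B(k - 1; M, p)`. Since
`p ↦ F_B(k - 1; M, p)` is nonincreasing (its derivative telescopes), this is at most
`F_B(k* - 1; M, δ) < γ` by minimality of `k*`. The sample-size condition says `(1 - δ)^M < γ`,
i.e. `F_B(0; M, δ) < γ`, so `k* ≥ 1`; and `F_B(M; M, δ) = 1` gives `k* ≤ M`.
-/

open MeasureTheory

/-- `k`-th order statistic of the sample `Z : Fin M → ℝ` (for `1 ≤ k ≤ M`):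
the smallest `q` such that at least `k` of the sample values are `≤ q`. -/
noncomputable def orderStat {M : ℕ} (Z : Fin M → ℝ) (k : ℕ) : ℝ :=
  sInf {q : ℝ | k ≤ (Finset.univ.filter fun t => Z t ≤ q).card}

/-- CDF of the Binomial(M, p) distribution evaluated at `k`. -/
noncomputable def binCDF (M : ℕ) (p : ℝ) (k : ℕ) : ℝ :=
  ∑ j ∈ Finset.range (k + 1), (M.choose j : ℝ) * p ^ j * (1 - p) ^ (M - j)

/-- `γ`-quantile of the Binomial(M, p) distribution. -/
noncomputable def binQuantile (M : ℕ) (p γ : ℝ) : ℕ :=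
  sInf {k : ℕ | γ ≤ binCDF M p k}

open Finset Set Filter Topology ProbabilityTheory

theorem hasDerivAt_binCDF (M k : ℕ) (p : ℝ) :
    HasDerivAt (fun x => binCDF M x k)
      (-((M.choose k : ℝ) * p ^ k * (((M - k : ℕ) : ℝ) * (1 - p) ^ (M - k - 1)))) p := by
  set v : ℕ → ℝ := fun j => (M.choose j : ℝ) * ((j : ℝ) * p ^ (j - 1)) * (1 - p) ^ (M - j)
  set w : ℕ → ℝ := fun j =>
    (M.choose j : ℝ) * p ^ j * (((M - j : ℕ) : ℝ) * (1 - p) ^ (M - j - 1))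
  have hterm (j : ℕ) : HasDerivAt
      (fun x : ℝ => (M.choose j : ℝ) * x ^ j * (1 - x) ^ (M - j)) (v j - w j) p := by
    have hsub : HasDerivAt (fun x : ℝ => (1 - x) ^ (M - j))
        (-(((M - j : ℕ) : ℝ) * (1 - p) ^ (M - j - 1))) p :=
      ((hasDerivAt_pow (M - j) (1 - p)).comp p ((hasDerivAt_id p).const_sub 1)).congr_deriv
        (by simp)
    exact (((hasDerivAt_pow j p).const_mul _).mul hsub).congr_deriv (by ring)
  -- `v (j + 1) = w j`, so the sum of the termwise derivatives telescopes
  have hvw (j : ℕ) : v (j + 1) = w j := by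
    have hc : ((M.choose (j + 1) : ℕ) : ℝ) * ((j + 1 : ℕ) : ℝ)
        = (M.choose j : ℝ) * ((M - j : ℕ) : ℝ) := by
      exact_mod_cast Nat.choose_succ_right_eq M j
    simp only [v, w, Nat.add_sub_cancel, show M - (j + 1) = M - j - 1 by omega]
    linear_combination (p ^ j * (1 - p) ^ (M - j - 1)) * hc
  have hsum : ∑ j ∈ range (k + 1), (v j - w j) = -w k := by
    simp only [← hvw, Finset.sum_range_sub', v]
    simp
  rw [← hsum]
  exact HasDerivAt.fun_sum fun j _ => hterm j

theorem binCDF_antitoneOn (M k : ℕ) : AntitoneOn (fun p => binCDF M p k) (Icc 0 1) := by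
  have hdiff : Differentiable ℝ (fun p => binCDF M p k) :=
    fun x => (hasDerivAt_binCDF M k x).differentiableAt
  refine antitoneOn_of_deriv_nonpos (convex_Icc 0 1) hdiff.continuous.continuousOn
    (hdiff.differentiableOn.mono interior_subset) ?_
  intro x hx
  rw [interior_Icc] at hx
  rw [(hasDerivAt_binCDF M k x).deriv, neg_nonpos]
  have hx₀ : 0 < x := hx.1
  have hx₁ : 0 ≤ 1 - x := by linarith [hx.2]
  positivity

theorem binCDF_zero (M : ℕ) (p : ℝ) : binCDF M p 0 = (1 - p) ^ M := by
  simp [binCDF]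

theorem binCDF_self (M : ℕ) (p : ℝ) : binCDF M p M = 1 := by
  simpa [binCDF, mul_comm, mul_assoc, mul_left_comm] using (add_pow p (1 - p) M).symm

theorem ofReal_binCDF (M k : ℕ) {p : ℝ} (hp₀ : 0 ≤ p) (hp₁ : p ≤ 1) :
    ENNReal.ofReal (binCDF M p k) = ∑ j ∈ range (k + 1),
      (M.choose j : ENNReal) * ENNReal.ofReal p ^ j * (1 - ENNReal.ofReal p) ^ (M - j) := by
  have h1p : 0 ≤ 1 - p := by linarith
  have hterm (j : ℕ) : 0 ≤ (M.choose j : ℝ) * p ^ j := by positivity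
  rw [binCDF, ENNReal.ofReal_sum_of_nonneg fun j _ => mul_nonneg (hterm j) (pow_nonneg h1p _)]
  refine sum_congr rfl fun j _ => ?_
  rw [ENNReal.ofReal_mul (hterm j), ENNReal.ofReal_mul (by positivity),
    ENNReal.ofReal_natCast, ENNReal.ofReal_pow hp₀, ENNReal.ofReal_pow h1p,
    ENNReal.ofReal_sub _ hp₀, ENNReal.ofReal_one]

theorem binQuantile_le {M : ℕ} {p γ : ℝ} (hγ : γ ≤ 1) : binQuantile M p γ ≤ M :=
  Nat.sInf_le (by simpa [binCDF_self] using hγ)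

theorem one_le_binQuantile {M : ℕ} {p γ : ℝ} (hγ : γ ≤ 1) (h : (1 - p) ^ M < γ) :
    1 ≤ binQuantile M p γ := by
  refine Nat.one_le_iff_ne_zero.2 fun h0 => ?_
  rcases Nat.sInf_eq_zero.1 h0 with h0 | hempty
  · exact (not_le.2 h) (by simpa [binCDF_zero] using h0)
  · exact hempty.subset (show M ∈ {k | γ ≤ binCDF M p k} by simpa [binCDF_self] using hγ)

theorem binCDF_pred_binQuantile_lt {M : ℕ} {p γ : ℝ} (hk : 1 ≤ binQuantile M p γ) :
    binCDF M p (binQuantile M p γ - 1) < γ :=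
  not_le.1 (Nat.notMem_of_lt_sInf (Nat.sub_lt hk one_pos))

theorem pow_lt_of_log_div_log_lt {x γ : ℝ} {M : ℕ} (hx₀ : 0 < x) (hx₁ : x < 1)
    (hγ : 0 < γ) (hM : Real.log γ / Real.log x < M) : x ^ M < γ := by
  have hlog : M * Real.log x < Real.log γ := (div_lt_iff_of_neg (Real.log_neg hx₀ hx₁)).1 hM
  rwa [← Real.log_pow, Real.log_lt_log_iff (pow_pos hx₀ M) hγ] at hlog

theorem le_apply_csInf_setOf_le {α β : Type*} [ConditionallyCompleteLinearOrder α]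
    [TopologicalSpace α] [OrderTopology α] [Preorder β] [TopologicalSpace β]
    [ClosedIciTopology β] {f : α → β} {c : β} (hne : {x | c ≤ f x}.Nonempty)
    (hbdd : BddBelow {x | c ≤ f x})
    (hf : ContinuousWithinAt f (Ici (sInf {x | c ≤ f x})) (sInf {x | c ≤ f x})) :
    c ≤ f (sInf {x | c ≤ f x}) := by
  have hsub : {x | c ≤ f x} ⊆ Ici (sInf {x | c ≤ f x}) := fun x hx => csInf_le hbdd hx
  exact closure_minimal (image_subset_iff.2 fun x hx => hx) isClosed_Ici
    ((hf.mono hsub).mem_closure_image (csInf_mem_closure hne hbdd))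

theorem ofReal_le_measure_Iic_sInf (μ : Measure ℝ) [IsProbabilityMeasure μ] {δ : ℝ}
    (hδ : δ ∈ Ioo (0 : ℝ) 1) :
    ENNReal.ofReal δ ≤ μ (Iic (sInf {τ : ℝ | ENNReal.ofReal δ ≤ μ (Iic τ)})) := by
  have hcdf : (fun x => μ (Iic x)) = fun x => ENNReal.ofReal (cdf μ x) := by
    funext x; rw [ofReal_cdf]
  have hbot : Tendsto (fun x => μ (Iic x)) atBot (𝓝 0) := by
    simpa [hcdf] using ENNReal.tendsto_ofReal (tendsto_cdf_atBot μ)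
  obtain ⟨x₀, hx₀⟩ :=
    eventually_atBot.1 (hbot.eventually_lt_const (ENNReal.ofReal_pos.2 hδ.1))
  refine le_apply_csInf_setOf_le (f := fun x => μ (Iic x)) ?_ ?_ ?_
  · have hlt : ENNReal.ofReal δ < μ univ := by
      simpa using ENNReal.ofReal_lt_one.2 hδ.2
    exact ((tendsto_measure_Iic_atTop μ).eventually_const_le hlt).exists
  · exact ⟨x₀, fun τ hτ => le_of_not_gt fun hlt => (hx₀ τ hlt.le).not_ge hτ⟩
  · rw [hcdf]
    exact ENNReal.continuous_ofReal.continuousAt.comp_continuousWithinAt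
      ((cdf μ).right_continuous _)

theorem orderStat_le_of_le_card {M : ℕ} (z : Fin M → ℝ) {k : ℕ} (hk : 0 < k) {q : ℝ}
    (h : k ≤ #{t | z t ≤ q}) : orderStat z k ≤ q := by
  refine csInf_le ⟨-∑ t, |z t|, fun q' hq' => ?_⟩ h
  obtain ⟨t, ht⟩ := card_pos.1 (hk.trans_le hq')
  calc -∑ t, |z t| ≤ -|z t| :=
        neg_le_neg (single_le_sum (fun i _ => abs_nonneg (z i)) (mem_univ t))
    _ ≤ z t := neg_abs_le _
    _ ≤ q' := (mem_filter.1 ht).2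

namespace ProbabilityTheory

theorem iIndepFun.iIndepSet_preimage {Ω ι β : Type*} [MeasurableSpace Ω] {P : Measure Ω}
    [MeasurableSpace β] {Z : ι → Ω → β} (hZ : ∀ t, Measurable (Z t)) (hind : iIndepFun Z P)
    {B : Set β} (hB : MeasurableSet B) :
    iIndepSet (fun t => Z t ⁻¹' B) P :=
  (iIndepSet_iff_meas_biInter fun t => hZ t hB).2 fun _ =>
    hind.meas_biInter fun _ _ => ⟨B, hB, rfl⟩

open scoped Classical

variable {Ω ι : Type*} [Fintype ι] {s : ι → Set Ω}

theorem setOf_filter_mem_eq (A : Finset ι) :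
    {ω | ({t | ω ∈ s t} : Finset ι) = A} = ⋂ t, if t ∈ A then s t else (s t)ᶜ := by
  ext ω
  simp only [Set.mem_ofPred_eq, Finset.ext_iff, mem_filter, Finset.mem_univ, true_and,
    Set.mem_iInter]
  refine forall_congr' fun t => ?_
  split_ifs with ht <;> simp [ht]

variable [MeasurableSpace Ω] {P : Measure Ω}

theorem measurableSet_setOf_filter_mem (hs : ∀ t, MeasurableSet (s t)) (Q : Finset ι → Prop) :
    MeasurableSet {ω | Q ({t | ω ∈ s t} : Finset ι)} := by
  have : {ω | Q ({t | ω ∈ s t} : Finset ι)}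
      = ⋃ A ∈ {A | Q A}, {ω | ({t | ω ∈ s t} : Finset ι) = A} := by
    ext; simp
  rw [this]
  refine MeasurableSet.biUnion (Set.to_countable _) fun A _ => ?_
  rw [setOf_filter_mem_eq]
  refine MeasurableSet.iInter fun t => ?_
  split_ifs
  exacts [hs t, (hs t).compl]

theorem iIndepSet.measure_filter_mem_eq [IsProbabilityMeasure P] (hs : ∀ t, MeasurableSet (s t))
    (hind : iIndepSet s P) {p : ENNReal} (hp : ∀ t, P (s t) = p) (A : Finset ι) :
    P {ω | ({t | ω ∈ s t} : Finset ι) = A} = p ^ #A * (1 - p) ^ (Fintype.card ι - #A) := by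
  have hgen (t : ι) : MeasurableSet[MeasurableSpace.generateFrom {s t}] (s t) :=
    MeasurableSpace.measurableSet_generateFrom rfl
  rw [setOf_filter_mem_eq, ((iIndepSet_iff_iIndep s P).1 hind).meas_iInter fun t => by
    split_ifs
    exacts [hgen t, (hgen t).compl]]
  have hfactor (t : ι) : P (if t ∈ A then s t else (s t)ᶜ) = if t ∈ A then p else 1 - p := by
    split_ifs
    exacts [hp t, by rw [prob_compl_eq_one_sub (hs t), hp t]]
  simp only [hfactor, prod_ite, prod_const, filter_not, filter_mem_eq_inter, Finset.univ_inter,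
    card_univ_sdiff]

theorem iIndepSet.measure_card_filter_mem_eq [IsProbabilityMeasure P]
    (hs : ∀ t, MeasurableSet (s t)) (hind : iIndepSet s P) {p : ENNReal} (hp : ∀ t, P (s t) = p)
    (j : ℕ) :
    P {ω | #({t | ω ∈ s t} : Finset ι) = j}
      = (Fintype.card ι).choose j * p ^ j * (1 - p) ^ (Fintype.card ι - j) := by
  calc P {ω | #({t | ω ∈ s t} : Finset ι) = j}
      = ∑ A ∈ powersetCard j univ, P {ω | ({t | ω ∈ s t} : Finset ι) = A} := by
        refine Eq.trans ?_ (sum_measure_preimage_singleton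
          (f := fun ω => ({t | ω ∈ s t} : Finset ι)) _
          fun A _ => measurableSet_setOf_filter_mem hs (· = A)).symm
        congr 1
        ext
        simp [mem_powersetCard]
    _ = ∑ A ∈ powersetCard j univ, p ^ j * (1 - p) ^ (Fintype.card ι - j) :=
        sum_congr rfl fun A hA => by
          rw [hind.measure_filter_mem_eq hs hp, (mem_powersetCard.1 hA).2]
    _ = _ := by rw [sum_const, card_powersetCard, card_univ, nsmul_eq_mul, mul_assoc]

theorem iIndepSet.measure_card_filter_mem_le [IsProbabilityMeasure P]
    (hs : ∀ t, MeasurableSet (s t)) (hind : iIndepSet s P) {p : ENNReal} (hp : ∀ t, P (s t) = p)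
    (n : ℕ) :
    P {ω | #({t | ω ∈ s t} : Finset ι) ≤ n} = ∑ j ∈ range (n + 1),
      ((Fintype.card ι).choose j : ENNReal) * p ^ j * (1 - p) ^ (Fintype.card ι - j) := by
  calc P {ω | #({t | ω ∈ s t} : Finset ι) ≤ n}
      = ∑ j ∈ range (n + 1), P {ω | #({t | ω ∈ s t} : Finset ι) = j} := by
        refine Eq.trans ?_ (sum_measure_preimage_singleton
          (f := fun ω => #({t | ω ∈ s t} : Finset ι)) _
          fun j _ => measurableSet_setOf_filter_mem hs (#· = j)).symm
        congr 1
        ext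
        simp
    _ = _ := sum_congr rfl fun j _ => hind.measure_card_filter_mem_eq hs hp j

theorem iIndepFun.measure_card_le_eq_ofReal_binCDF [IsProbabilityMeasure P] {M : ℕ}
    {Z : Fin M → Ω → ℝ} (hZ : ∀ t, Measurable (Z t)) (hind : iIndepFun Z P) {q p : ℝ}
    (hp₀ : 0 ≤ p) (hp₁ : p ≤ 1) (hq : ∀ t, P (Z t ⁻¹' Iic q) = ENNReal.ofReal p)
    (n : ℕ) :
    P {ω | #{t | Z t ω ≤ q} ≤ n} = ENNReal.ofReal (binCDF M p n) := by
  rw [ofReal_binCDF _ _ hp₀ hp₁]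
  -- `convert` reconciles the decidability instances of the two filters
  convert (hind.iIndepSet_preimage hZ measurableSet_Iic).measure_card_filter_mem_le
    (fun t => hZ t measurableSet_Iic) hq n using 2 <;> simp

end ProbabilityTheory

theorem stmt7 {Ω : Type*} [MeasurableSpace Ω] (P : Measure Ω) [IsProbabilityMeasure P]
    {M : ℕ} (Z : Fin M → Ω → ℝ) (hmeas : ∀ t, Measurable (Z t))
    (μ : Measure ℝ) [IsProbabilityMeasure μ]
    (hid : ∀ t, Measure.map (Z t) P = μ)
    (hindep : ProbabilityTheory.iIndepFun Z P)
    (δ γ : ℝ) (hδ : δ ∈ Set.Ioo (0:ℝ) 1) (hγ : γ ∈ Set.Ioo (0:ℝ) 1)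
    (hM : (M : ℝ) > Real.log γ / Real.log (1 - δ)) :
    1 ≤ binQuantile M δ γ ∧ binQuantile M δ γ ≤ M ∧
    ENNReal.ofReal (1 - γ) ≤
      P {ω | orderStat (fun t => Z t ω) (binQuantile M δ γ)
          ≤ sInf {τ : ℝ | ENNReal.ofReal δ ≤ μ (Set.Iic τ)}} := by
  obtain ⟨hδ₀, hδ₁⟩ := hδ
  obtain ⟨hγ₀, hγ₁⟩ := hγ
  have hk₁ : 1 ≤ binQuantile M δ γ :=
    one_le_binQuantile hγ₁.le (pow_lt_of_log_div_log_lt (by linarith) (by linarith) hγ₀ hM)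
  refine ⟨hk₁, binQuantile_le hγ₁.le, ?_⟩
  set k := binQuantile M δ γ
  set q := sInf {τ : ℝ | ENNReal.ofReal δ ≤ μ (Iic τ)}
  obtain ⟨p, hp₀, hμq⟩ : ∃ p : ℝ, 0 ≤ p ∧ μ (Iic q) = ENNReal.ofReal p :=
    ⟨_, ENNReal.toReal_nonneg, (ENNReal.ofReal_toReal (measure_ne_top μ _)).symm⟩
  have hp₁ : p ≤ 1 := ENNReal.ofReal_le_one.1 (hμq ▸ prob_le_one)
  have hδp : δ ≤ p := (ENNReal.ofReal_le_ofReal_iff hp₀).1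
    (hμq ▸ ofReal_le_measure_Iic_sInf μ ⟨hδ₀, hδ₁⟩)
  have hZq (t : Fin M) : P (Z t ⁻¹' Iic q) = ENNReal.ofReal p := by
    rw [← Measure.map_apply (hmeas t) measurableSet_Iic, hid t, hμq]
  have hcdf : binCDF M p (k - 1) ≤ γ :=
    ((binCDF_antitoneOn M (k - 1) ⟨hδ₀.le, hδ₁.le⟩ ⟨hδ₀.le.trans hδp, hp₁⟩ hδp).trans_lt
      (binCDF_pred_binQuantile_lt hk₁)).le
  calc ENNReal.ofReal (1 - γ) ≤ 1 - P {ω | #{t | Z t ω ≤ q} ≤ k - 1} := by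
        rw [hindep.measure_card_le_eq_ofReal_binCDF hmeas hp₀ hp₁ hZq,
          ENNReal.ofReal_sub _ hγ₀.le, ENNReal.ofReal_one]
        exact tsub_le_tsub_left (ENNReal.ofReal_le_ofReal hcdf) 1
    _ ≤ P {ω | #{t | Z t ω ≤ q} ≤ k - 1}ᶜ :=
        tsub_le_iff_left.2 (measure_univ (μ := P) ▸ measure_univ_le_add_compl _)
    _ ≤ P {ω | orderStat (fun t => Z t ω) k ≤ q} :=
        measure_mono fun ω hω => orderStat_le_of_le_card _ hk₁ (by
          simp only [Set.mem_compl_iff, Set.mem_ofPred_eq, not_le] at hω; omega)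
end

section
/- Consider a Markov chain x_{k+1} = F(x_k, κ(x_k), ξ_k) with i.i.d. disturbances (ξ_k), and suppose the one-step safe-stay condition P_ξ{F(x, κ(x), ξ) ∈ S} ≥ 1-δ holds for all x ∈ S, where the control law κ depends measurably on a dataset D ∼ P_ξ^M. Suppose there is an event E on the data space with P_ξ^M(E) ≥ 1 - γ̃ such that for D ∈ E the one-step condition holds for all x ∈ S simultaneously. Then P_ξ^M{ P_N(x_0; κ_D) ≤ ε } ≥ 1 - γ̃ for all x_0 ∈ S, where P_N is the N-step exit probability and δ ≤ 1 - (1-ε)^{1/N}. -/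
/-!
Conditioning on the first disturbance (Fubini for `Measure.pi` over `Fin.cons`) and using the
one-step bound at the successor state shows by induction on the horizon that, for every dataset
in `E`, the closed loop stays in `S` for `N` steps with probability at least
`(1 - δ) ^ N ≥ 1 - ε`. Hence `E` is contained in the set of datasets whose exit probability is
at most `ε`, and the data-level confidence is inherited from `E`.
-/

open MeasureTheory

/-- Closed-loop trajectory of `x_{k+1} = F (x_k, κ(x_k), ξ_k)` driven by the
disturbance realization `ω : Fin N → Ξ`, started at `x0`. -/
def traj {V U Ξ : Type*} (N : ℕ) (F : V → U → Ξ → V) (κ : V → U)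
    (x0 : V) (ω : Fin N → Ξ) : ℕ → V
  | 0 => x0
  | k + 1 =>
    if hk : k < N then
      F (traj N F κ x0 ω k) (κ (traj N F κ x0 ω k)) (ω ⟨k, hk⟩)
    else traj N F κ x0 ω k

theorem MeasureTheory.Measure.pi_apply_eq_lintegral_cons {Ξ : Type*} [MeasurableSpace Ξ]
    (μ : Measure Ξ) [SigmaFinite μ] {n : ℕ} {A : Set (Fin (n + 1) → Ξ)}
    (hA : MeasurableSet A) :
    Measure.pi (fun _ => μ) A =
      ∫⁻ v, Measure.pi (fun _ : Fin n => μ) (Fin.cons (α := fun _ => Ξ) v ⁻¹' A) ∂μ := by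
  set e := MeasurableEquiv.piFinSuccAbove (fun _ : Fin (n + 1) => Ξ) 0
  have he := (measurePreserving_piFinSuccAbove (fun _ : Fin (n + 1) => μ) 0).symm
  rw [← he.measure_preimage_equiv, Measure.prod_apply (e.symm.measurable hA)]
  congr! with v
  ext ω
  simp only [e, Set.mem_preimage, MeasurableEquiv.piFinSuccAbove_symm_apply,
    Fin.insertNthEquiv_zero]
  rfl

section ClosedLoop

variable {V U Ξ : Type*} {F : V → U → Ξ → V} {κ : V → U}

def staySet (F : V → U → Ξ → V) (κ : V → U) (S : Set V) (N : ℕ) (x0 : V) : Set (Fin N → Ξ) :=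
  {ω | ∀ k < N + 1, traj N F κ x0 ω k ∈ S}

theorem traj_cons_succ (n : ℕ) (x0 : V) (v : Ξ) (ω : Fin n → Ξ) :
    ∀ k, traj (n + 1) F κ x0 (Fin.cons v ω) (k + 1) = traj n F κ (F x0 (κ x0) v) ω k
  | 0 => by simp [traj]
  | k + 1 => by
    rw [traj.eq_2 (n + 1), traj.eq_2 n, traj_cons_succ n x0 v ω k]
    by_cases hk : k < n
    · rw [dif_pos (Nat.succ_lt_succ hk), dif_pos hk]
      rfl
    · rw [dif_neg (mt Nat.lt_of_succ_lt_succ hk), dif_neg hk]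

theorem cons_mem_staySet_iff {S : Set V} {n : ℕ} {x0 : V} (hx0 : x0 ∈ S) (v : Ξ)
    (ω : Fin n → Ξ) :
    Fin.cons v ω ∈ staySet F κ S (n + 1) x0 ↔ ω ∈ staySet F κ S n (F x0 (κ x0) v) := by
  simp only [staySet, Set.mem_ofPred_eq, Nat.forall_lt_succ_left (n := n + 1), traj_cons_succ,
    traj.eq_1, hx0, true_and]

variable [MeasurableSpace V] [MeasurableSpace Ξ]

theorem measurable_traj (hcl : Measurable fun q : V × Ξ => F q.1 (κ q.1) q.2) (N : ℕ)
    (x0 : V) : ∀ k, Measurable fun ω : Fin N → Ξ => traj N F κ x0 ω k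
  | 0 => measurable_const
  | k + 1 => by
    by_cases hk : k < N
    · simp only [traj, dif_pos hk]
      exact hcl.comp ((measurable_traj hcl N x0 k).prodMk (measurable_pi_apply _))
    · simpa only [traj, dif_neg hk] using measurable_traj hcl N x0 k

theorem measurableSet_staySet (hcl : Measurable fun q : V × Ξ => F q.1 (κ q.1) q.2)
    {S : Set V} (hS : MeasurableSet S) (N : ℕ) (x0 : V) :
    MeasurableSet (staySet F κ S N x0) := by
  simp only [staySet, Set.ofPred_forall]
  exact .iInter fun k => .iInter fun _ => measurable_traj hcl N x0 k hS

theorem pow_le_measure_staySet (μ : Measure Ξ) [IsProbabilityMeasure μ]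
    (hcl : Measurable fun q : V × Ξ => F q.1 (κ q.1) q.2) {S : Set V} (hS : MeasurableSet S)
    {c : ENNReal} (hstep : ∀ x ∈ S, c ≤ μ {v | F x (κ x) v ∈ S}) :
    ∀ (n : ℕ), ∀ x0 ∈ S, c ^ n ≤ Measure.pi (fun _ : Fin n => μ) (staySet F κ S n x0)
  | 0, x0, hx0 => by
    have : staySet F κ S 0 x0 = Set.univ := by
      ext ω
      simp [staySet, traj, hx0]
    simp [this]
  | n + 1, x0, hx0 => by
    set x1 : Ξ → V := fun v => F x0 (κ x0) v
    have hx1 : Measurable x1 := hcl.comp (measurable_const.prodMk measurable_id)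
    have hcons : ∀ v, Fin.cons (α := fun _ => Ξ) v ⁻¹' staySet F κ S (n + 1) x0 =
        staySet F κ S n (x1 v) := fun v => Set.ext (cons_mem_staySet_iff hx0 v)
    rw [Measure.pi_apply_eq_lintegral_cons μ (measurableSet_staySet hcl hS (n + 1) x0)]
    simp only [hcons]
    calc c ^ (n + 1) = c ^ n * c := pow_succ c n
      _ ≤ c ^ n * μ (x1 ⁻¹' S) := mul_le_mul_right (hstep x0 hx0) _
      _ = ∫⁻ v, (x1 ⁻¹' S).indicator (fun _ => c ^ n) v ∂μ :=
        (lintegral_indicator_const (hx1 hS) _).symm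
      _ ≤ _ := lintegral_mono <| Set.indicator_le fun v hv =>
        pow_le_measure_staySet μ hcl hS hstep n (x1 v) hv

theorem measure_exit_le_one_sub_pow (μ : Measure Ξ) [IsProbabilityMeasure μ]
    (hcl : Measurable fun q : V × Ξ => F q.1 (κ q.1) q.2) {S : Set V} (hS : MeasurableSet S)
    {c : ENNReal} (hstep : ∀ x ∈ S, c ≤ μ {v | F x (κ x) v ∈ S}) (N : ℕ) {x0 : V}
    (hx0 : x0 ∈ S) :
    Measure.pi (fun _ : Fin N => μ) {ω | ∃ k ∈ Finset.Icc 1 N, traj N F κ x0 ω k ∉ S} ≤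
      1 - c ^ N := by
  have hexit : {ω | ∃ k ∈ Finset.Icc 1 N, traj N F κ x0 ω k ∉ S} ⊆ (staySet F κ S N x0)ᶜ :=
    fun ω ⟨k, hk, hkS⟩ hstay => hkS (hstay k (Nat.lt_succ_of_le (Finset.mem_Icc.mp hk).2))
  calc _ ≤ Measure.pi (fun _ : Fin N => μ) (staySet F κ S N x0)ᶜ := measure_mono hexit
    _ = 1 - Measure.pi (fun _ : Fin N => μ) (staySet F κ S N x0) :=
      prob_compl_eq_one_sub (measurableSet_staySet hcl hS N x0)
    _ ≤ 1 - c ^ N := tsub_le_tsub_left (pow_le_measure_staySet μ hcl hS hstep N x0 hx0) 1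

end ClosedLoop

theorem one_sub_ofReal_one_sub_pow_le {ε δ : ℝ} (N : ℕ) (hε₀ : 0 ≤ ε) (hε₁ : ε ≤ 1)
    (hδ : δ ≤ 1 - (1 - ε) ^ (N : ℝ)⁻¹) :
    1 - ENNReal.ofReal (1 - δ) ^ N ≤ ENNReal.ofReal ε := by
  have hroot : (1 - ε) ^ (N : ℝ)⁻¹ ≤ 1 - δ := by linarith
  have hpow : 1 - ε ≤ (1 - δ) ^ N := by
    rcases Nat.eq_zero_or_pos N with rfl | hN
    · simpa using hε₀
    · calc 1 - ε = ((1 - ε) ^ (N : ℝ)⁻¹) ^ N :=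
            (Real.rpow_inv_natCast_pow (by linarith) hN.ne').symm
        _ ≤ (1 - δ) ^ N := pow_le_pow_left₀ (by positivity) hroot N
  have hδ₁ : 0 ≤ 1 - δ := le_trans (by positivity) hroot
  calc 1 - ENNReal.ofReal (1 - δ) ^ N ≤ 1 - ENNReal.ofReal (1 - ε) := by
        rw [← ENNReal.ofReal_pow hδ₁]
        exact tsub_le_tsub_left (ENNReal.ofReal_le_ofReal hpow) 1
    _ = ENNReal.ofReal ε := by
        rw [← ENNReal.ofReal_one, ← ENNReal.ofReal_sub _ (by linarith), sub_sub_cancel]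

theorem stmt14_general {V U Ξ : Type*} [MeasurableSpace V] [MeasurableSpace Ξ]
    (μ : Measure Ξ) [IsProbabilityMeasure μ]
    (N M : ℕ)
    (ε δ γ' : ℝ) (hε : ε ∈ Set.Ioo (0:ℝ) 1)
    (hδε : δ ≤ 1 - (1 - ε) ^ ((N : ℝ)⁻¹))
    (F : V → U → Ξ → V) (κ : (Fin M → Ξ) → V → U)
    (hcl : ∀ d : Fin M → Ξ, Measurable (fun q : V × Ξ => F q.1 (κ d q.1) q.2))
    (S : Set V) (hS : MeasurableSet S)
    (E : Set (Fin M → Ξ))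
    (hE : ENNReal.ofReal (1 - γ') ≤ (Measure.pi fun _ : Fin M => μ) E)
    (hstep : ∀ d ∈ E, ∀ x ∈ S,
      ENNReal.ofReal (1 - δ) ≤ μ {v | F x (κ d x) v ∈ S}) :
    ∀ x0 ∈ S,
      ENNReal.ofReal (1 - γ') ≤
        (Measure.pi fun _ : Fin M => μ)
          {d | (Measure.pi fun _ : Fin N => μ)
              {ω | ∃ k ∈ Finset.Icc 1 N, traj N F (κ d) x0 ω k ∉ S}
            ≤ ENNReal.ofReal ε} := by
  intro x0 hx0
  refine hE.trans (measure_mono fun d hd => ?_)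
  exact (measure_exit_le_one_sub_pow μ (hcl d) hS (hstep d hd) N hx0).trans
    (one_sub_ofReal_one_sub_pow_le N hε.1.le hε.2.le hδε)

theorem stmt14 {V U Ξ : Type*} [MeasurableSpace V] [MeasurableSpace Ξ]
    (μ : Measure Ξ) [IsProbabilityMeasure μ]
    (N M : ℕ) (hN : 0 < N)
    (ε δ γ' : ℝ) (hε : ε ∈ Set.Ioo (0:ℝ) 1) (hδ : δ ∈ Set.Ioo (0:ℝ) 1)
    (hγ' : γ' ∈ Set.Ioo (0:ℝ) 1)
    (hδε : δ ≤ 1 - (1 - ε) ^ ((N : ℝ)⁻¹))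
    (F : V → U → Ξ → V) (κ : (Fin M → Ξ) → V → U)
    (hcl : ∀ d : Fin M → Ξ, Measurable (fun q : V × Ξ => F q.1 (κ d q.1) q.2))
    (S : Set V) (hS : MeasurableSet S)
    (E : Set (Fin M → Ξ))
    (hE : ENNReal.ofReal (1 - γ') ≤ (Measure.pi fun _ : Fin M => μ) E)
    (hstep : ∀ d ∈ E, ∀ x ∈ S,
      ENNReal.ofReal (1 - δ) ≤ μ {v | F x (κ d x) v ∈ S}) :
    ∀ x0 ∈ S,
      ENNReal.ofReal (1 - γ') ≤
        (Measure.pi fun _ : Fin M => μ)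
          {d | (Measure.pi fun _ : Fin N => μ)
              {ω | ∃ k ∈ Finset.Icc 1 N, traj N F (κ d) x0 ω k ∉ S}
            ≤ ENNReal.ofReal ε} :=
  stmt14_general μ N M ε δ γ' hε hδε F κ hcl S hS E hE hstep
end
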